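/- Let $T\in(0,\infty]$, $\sigma\in(0,T)$, $A>0$, $B>0$, and let $y:[0,T)\to[0,\infty)$ be absolutely continuous satisfying $y'(t)+Ay(t)\le h(t)$ for a.e. $t\in(0,T)$, where $h\in L^1_{loc}([0,T))$ is nonnegative and satisfies $\int_t^{t+\sigma} h(s)\,ds \le B$ for all $t\in(0,T-\sigma)$. Then $y(t)\le \max\{y(0)+B,\ \frac{B}{A\sigma}+2B\}$ for all $t\in(0,T).$ -/

import Mathlib

open MeasureTheory

theorem stmt_0 (T : EReal) (σ A B : ℝ) (hσ : 0 < σ) (hσT : (σ : EReal) < T)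
    (hA : 0 < A) (hB : 0 < B) (y h : ℝ → ℝ)
    (hy_nonneg : ∀ t : ℝ, 0 ≤ t → (t : EReal) < T → 0 ≤ y t)
    (hh_nonneg : ∀ t : ℝ, 0 ≤ t → (t : EReal) < T → 0 ≤ h t)
    (hh_int : ∀ t : ℝ, 0 ≤ t → (t : EReal) < T → IntervalIntegrable h volume 0 t)
    (hAC : ∀ s t : ℝ, 0 ≤ s → s ≤ t → (t : EReal) < T →
      y t - y s = ∫ u in s..t, deriv y u)
    (hode : ∀ᵐ (t : ℝ) ∂volume, 0 < t → (t : EReal) < T → deriv y t + A * y t ≤ h t)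
    (hwin : ∀ t : ℝ, 0 < t → ((t + σ : ℝ) : EReal) < T → (∫ s in t..t + σ, h s) ≤ B) :
    ∀ t : ℝ, 0 ≤ t → (t : EReal) < T → y t ≤ max (y 0 + B) (B / (A * σ) + 2 * B) := by
  set M := max (y 0 + B) (B / (A * σ) + 2 * B) with hM
  have hltT : ∀ {s t : ℝ}, s ≤ t → (t : EReal) < T → (s : EReal) < T := by
    intro s t hst hTt
    exact lt_of_le_of_lt (EReal.coe_le_coe_iff.2 hst) hTt
  -- integrability of h on subintervals
  have hint : ∀ s t : ℝ, 0 ≤ s → s ≤ t → (t : EReal) < T →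
      IntervalIntegrable h volume s t := by
    intro s t hs hst hT
    refine (hh_int t (hs.trans hst) hT).mono_set ?_
    rw [Set.uIcc_of_le hst, Set.uIcc_of_le (hs.trans hst)]
    exact Set.Icc_subset_Icc hs le_rfl
  -- window bound for positive left endpoint
  have hBpos : ∀ s t : ℝ, 0 < s → s ≤ t → t ≤ s + σ → (t : EReal) < T →
      (∫ u in s..t, h u) ≤ B := by
    intro s t hs hst htsσ hT
    have hmax : ((max t σ : ℝ) : EReal) < T := by
      rcases max_cases t σ with ⟨h1, _⟩ | ⟨h1, _⟩ <;> rw [h1]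
      · exact hT
      · exact hσT
    obtain ⟨c, hc1, hc2⟩ := EReal.lt_iff_exists_real_btwn.1 hmax
    have hc1' : max t σ < c := EReal.coe_lt_coe_iff.1 hc1
    have htc : t < c := lt_of_le_of_lt (le_max_left _ _) hc1'
    have hσc : σ < c := lt_of_le_of_lt (le_max_right _ _) hc1'
    set w := min s (c - σ) with hw
    have hw0 : 0 < w := lt_min hs (by linarith)
    have hws : w ≤ s := min_le_left _ _
    have hwσc : w + σ ≤ c := by
      have := min_le_right s (c - σ); linarith
    have hwσT : ((w + σ : ℝ) : EReal) < T :=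
      lt_of_le_of_lt (EReal.coe_le_coe_iff.2 hwσc) hc2
    have htwσ : t ≤ w + σ := by
      rcases min_cases s (c - σ) with ⟨h1, _⟩ | ⟨h1, _⟩ <;> rw [hw, h1] <;> linarith
    have hnn : ∀ u ∈ Set.Icc w (w + σ), 0 ≤ h u := by
      intro u hu
      exact hh_nonneg u (hw0.le.trans hu.1) (hltT hu.2 hwσT)
    have hi_ws : IntervalIntegrable h volume w s := hint w s hw0.le hws (hltT hst hT)
    have hi_st : IntervalIntegrable h volume s t := hint s t hs.le hst hT
    have hi_tw : IntervalIntegrable h volume t (w + σ) :=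
      hint t (w + σ) (hs.le.trans hst) htwσ hwσT
    have e1 : (∫ u in w..t, h u) = (∫ u in w..s, h u) + ∫ u in s..t, h u :=
      (intervalIntegral.integral_add_adjacent_intervals hi_ws hi_st).symm
    have e2 : (∫ u in w..(w + σ), h u) = (∫ u in w..t, h u) + ∫ u in t..(w + σ), h u :=
      (intervalIntegral.integral_add_adjacent_intervals (hi_ws.trans hi_st) hi_tw).symm
    have n1 : 0 ≤ ∫ u in w..s, h u :=
      intervalIntegral.integral_nonneg hws (fun u hu =>
        hnn u ⟨hu.1, by linarith [hu.2, hst, htwσ]⟩)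
    have n2 : 0 ≤ ∫ u in t..(w + σ), h u :=
      intervalIntegral.integral_nonneg htwσ (fun u hu =>
        hnn u ⟨le_trans (hws.trans hst) hu.1, hu.2⟩)
    have := hwin w hw0 hwσT
    linarith [e1, e2]
  -- window bound in general
  have hBle : ∀ s t : ℝ, 0 ≤ s → s ≤ t → t ≤ s + σ → (t : EReal) < T →
      (∫ u in s..t, h u) ≤ B := by
    intro s t hs hst htsσ hT
    rcases hs.lt_or_eq with hs' | hs'
    · exact hBpos s t hs' hst htsσ hT
    · subst hs'
      rcases hst.lt_or_eq with ht' | ht'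
      · -- 0 < t : limit argument as left endpoint tends to 0
        set F : ℝ → ℝ := fun x => ∫ u in (0:ℝ)..x, h u with hF
        have hIcc : IntegrableOn h (Set.uIcc 0 t) volume := by
          rw [Set.uIcc_of_le hst]
          exact (intervalIntegrable_iff_integrableOn_Icc_of_le hst).1 (hh_int t hst hT)
        have hFc : ContinuousOn F (Set.uIcc 0 t) :=
          intervalIntegral.continuousOn_primitive_interval hIcc
        have htend : Filter.Tendsto F (nhdsWithin 0 (Set.Ioc 0 t)) (nhds (F 0)) :=
          (hFc 0 Set.left_mem_uIcc).mono_left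
            (nhdsWithin_mono 0 (by rw [Set.uIcc_of_le hst]; exact Set.Ioc_subset_Icc_self))
        have hF0 : F 0 = 0 := intervalIntegral.integral_same
        have hev : ∀ᶠ ε in nhdsWithin 0 (Set.Ioc 0 t), F t - B ≤ F ε := by
          filter_upwards [self_mem_nhdsWithin] with ε hε
          have hsplit : F t = F ε + ∫ u in ε..t, h u :=
            (intervalIntegral.integral_add_adjacent_intervals
              (hint 0 ε le_rfl hε.1.le (hltT hε.2 hT))
              (hint ε t hε.1.le hε.2 hT)).symm
          have hb : (∫ u in ε..t, h u) ≤ B :=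
            hBpos ε t hε.1 hε.2 (by linarith [htsσ, hε.1]) hT
          linarith
        have : Filter.NeBot (nhdsWithin 0 (Set.Ioc 0 t)) := left_nhdsWithin_Ioc_neBot ht'
        have hle : F t - B ≤ F 0 := ge_of_tendsto htend hev
        rw [hF0] at hle
        linarith
      · rw [← ht', intervalIntegral.integral_same]; linarith
  -- Claim A : y t - y s ≤ ∫ h
  have hmono_y : ∀ s t : ℝ, 0 ≤ s → s ≤ t → (t : EReal) < T →
      y t - y s ≤ ∫ u in s..t, h u := by
    intro s t hs hst hT
    by_cases hdi : IntervalIntegrable (deriv y) volume s t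
    · have hnull : volume.restrict (Set.Icc s t) {0} = 0 := by
        rw [Measure.restrict_apply (measurableSet_singleton 0)]
        exact measure_mono_null Set.inter_subset_left (measure_singleton 0)
      have h3 : ∀ᵐ u ∂(volume.restrict (Set.Icc s t)), u ≠ 0 := by
        rw [Filter.eventually_iff, mem_ae_iff]
        convert hnull using 2
        ext u; simp
      have hae : (fun u => deriv y u) ≤ᵐ[volume.restrict (Set.Icc s t)] h := by
        filter_upwards [ae_restrict_mem measurableSet_Icc,
          hode.filter_mono (ae_mono Measure.restrict_le_self), h3] with u hu h2u h3u
        have hu0 : 0 < u := lt_of_le_of_ne (hs.trans hu.1) (Ne.symm h3u)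
        have huT : (u : EReal) < T := hltT hu.2 hT
        have h4 := h2u hu0 huT
        have h5 := hy_nonneg u hu0.le huT
        nlinarith
      rw [hAC s t hs hst hT]
      exact intervalIntegral.integral_mono_ae_restrict hst hdi (hint s t hs hst hT) hae
    · rw [hAC s t hs hst hT, intervalIntegral.integral_undef hdi]
      exact intervalIntegral.integral_nonneg hst
        (fun u hu => hh_nonneg u (hs.trans hu.1) (hltT hu.2 hT))
  -- Claim C : one-window increment bound
  have hstep : ∀ s t : ℝ, 0 ≤ s → s ≤ t → t ≤ s + σ → (t : EReal) < T →
      y t ≤ y s + B := by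
    intro s t hs hst h1 hT
    have h2 := hmono_y s t hs hst hT
    have h3 := hBle s t hs hst h1 hT
    linarith
  -- Main induction
  have key : ∀ n : ℕ, ∀ t : ℝ, 0 ≤ t → t ≤ n * σ → (t : EReal) < T → y t ≤ M := by
    intro n
    induction n with
    | zero =>
      intro t ht ht' hT
      have ht0 : t = 0 := le_antisymm (by simpa using ht') ht
      subst ht0
      exact le_trans (by linarith) (le_max_left (y 0 + B) (B / (A * σ) + 2 * B))
    | succ n ih =>
      intro t ht htn hT
      by_cases hc1 : t ≤ n * σ
      · exact ih t ht hc1 hT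
      push_neg at hc1
      by_cases hc2 : t ≤ σ
      · have := hstep 0 t le_rfl ht (by linarith) hT
        exact le_trans this (le_max_left _ _)
      push_neg at hc2
      set s := t - σ with hs
      have hs0 : 0 < s := by rw [hs]; linarith
      have hst : s ≤ t := by rw [hs]; linarith
      have hsT : (s : EReal) < T := hltT hst hT
      have hsn : s ≤ n * σ := by
        push_cast at htn
        rw [hs]; linarith
      have hys : y s ≤ M := ih s hs0.le hsn hsT
      by_cases hex : ∃ u ∈ Set.Icc s t, y u < B / (A * σ)
      · obtain ⟨u, hu, hyu⟩ := hex
        have h1 : y t ≤ y u + B :=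
          hstep u t (hs0.le.trans hu.1) hu.2 (by rw [hs] at hu; linarith [hu.1]) hT
        refine le_trans ?_ (le_max_right (y 0 + B) (B / (A * σ) + 2 * B))
        linarith
      push_neg at hex
      by_cases hdi : IntervalIntegrable (deriv y) volume s t
      · -- integrable case : y is continuous hence integrable on [s,t]
        have hcont : ContinuousOn y (Set.Icc s t) := by
          have hprim : ContinuousOn (fun u => y s + ∫ v in s..u, deriv y v)
              (Set.Icc s t) := by
            have h5 := intervalIntegral.continuousOn_primitive_interval
              (μ := volume) (f := deriv y) (a := s) (b := t)
              (by rw [Set.uIcc_of_le hst]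
                  exact (intervalIntegrable_iff_integrableOn_Icc_of_le hst).1 hdi)
            rw [Set.uIcc_of_le hst] at h5
            exact continuousOn_const.add h5
          refine hprim.congr (fun u hu => ?_)
          have h6 := hAC s u hs0.le hu.1 (hltT hu.2 hT)
          linarith
        have hyint : IntervalIntegrable y volume s t := by
          apply ContinuousOn.intervalIntegrable
          rw [Set.uIcc_of_le hst]; exact hcont
        have hAyint : IntervalIntegrable (fun u => A * y u) volume s t := hyint.const_mul A
        have hhint' : IntervalIntegrable h volume s t := hint s t hs0.le hst hT
        have haeineq : (fun u => A * y u) ≤ᵐ[volume.restrict (Set.Icc s t)]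
            (fun u => h u - deriv y u) := by
          filter_upwards [ae_restrict_mem measurableSet_Icc,
            hode.filter_mono (ae_mono Measure.restrict_le_self)] with u hu hu2
          have := hu2 (lt_of_lt_of_le hs0 hu.1) (hltT hu.2 hT)
          linarith
        have hm : (∫ u in s..t, A * y u) ≤ ∫ u in s..t, (h u - deriv y u) :=
          intervalIntegral.integral_mono_ae_restrict hst hAyint (hhint'.sub hdi) haeineq
        rw [intervalIntegral.integral_sub hhint' hdi,
          intervalIntegral.integral_const_mul] at hm
        have hylow : (∫ _ in s..t, (B / (A * σ))) ≤ ∫ u in s..t, y u :=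
          intervalIntegral.integral_mono_on hst intervalIntegrable_const hyint
            (fun u hu => hex u hu)
        rw [intervalIntegral.integral_const] at hylow
        have hts : t - s = σ := by rw [hs]; ring
        rw [hts] at hylow
        have hIh : (∫ u in s..t, h u) ≤ B := hBle s t hs0.le hst (by rw [hs]; linarith) hT
        have hderiv_eq : (∫ u in s..t, deriv y u) = y t - y s :=
          (hAC s t hs0.le hst hT).symm
        rw [hderiv_eq] at hm
        have hABσ : A * (σ * (B / (A * σ))) = B := by field_simp
        have h7 : A * (σ * (B / (A * σ))) ≤ A * ∫ u in s..t, y u := by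
          apply mul_le_mul_of_nonneg_left _ hA.le
          rw [smul_eq_mul] at hylow
          exact hylow
        rw [hABσ] at h7
        have : y t ≤ y s := by linarith
        linarith
      · have h8 := hAC s t hs0.le hst hT
        rw [intervalIntegral.integral_undef hdi] at h8
        linarith
  intro t ht hT
  refine key ⌈t / σ⌉₊ t ht ?_ hT
  have := Nat.le_ceil (t / σ)
  exact (div_le_iff₀ hσ).1 this
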